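/- arXiv:2212.04907 — 2 statements merged into one kernel-verified Lean document; each statement's English description precedes it below -/
import Mathlib

section
/- For a function f analytic on a disk of radius R > |x| with Taylor coefficients a_n, f(x) = ∑_{n=0}^∞ (1/2^{n+1}) ∑_{k=0}^n C(n,k) x^k a_k (Euler transform representation). -/
open Finset

/-!
Put `b k = a k * x ^ k`; this series converges absolutely because `‖x‖ < R`. For each `k` the
weights `C(n, k) / 2 ^ (n + 1)` sum to `1` over `n` (a negative binomial series at `1/2`), so
`∑ₖ bₖ = ∑ₖ ∑ₙ C(n, k) / 2 ^ (n + 1) • bₖ`, and absolute convergence of the double series lets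
us swap the order of summation; the inner sum over `k` is finite since `C(n, k) = 0` for `k > n`.
-/

theorem hasSum_choose_div_two_pow_succ (k : ℕ) :
    HasSum (fun n : ℕ => (n.choose k : ℝ) / 2 ^ (n + 1)) 1 := by
  have h := (hasSum_choose_mul_geometric_of_norm_lt_one (𝕜 := ℝ) k
    (r := 1 / 2) (by norm_num)).mul_right ((1 / 2) ^ (k + 1))
  have hlow : ∑ i ∈ range k, (i.choose k : ℝ) / 2 ^ (i + 1) = 0 :=
    sum_eq_zero fun i hi => by rw [Nat.choose_eq_zero_of_lt (mem_range.mp hi)]; simp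
  have hshift (n : ℕ) : ((n + k).choose k : ℝ) / 2 ^ (n + k + 1) =
      (n + k).choose k * (1 / 2) ^ n * (1 / 2) ^ (k + 1) := by
    simp only [one_div, inv_pow]
    ring
  have hval : (1 / (1 - 1 / 2) ^ (k + 1) * (1 / 2) ^ (k + 1) : ℝ) = 1 - 0 := by norm_num
  rw [← hasSum_nat_add_iff' k, hlow, funext hshift, ← hval]
  exact h

theorem hasSum_tsum_smul_of_weights_hasSum_one {ι κ E : Type*} [NormedAddCommGroup E]
    [NormedSpace ℝ E] [CompleteSpace E] {w : ι → κ → ℝ} (hw_nonneg : ∀ i k, 0 ≤ w i k)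
    (hw : ∀ k, HasSum (fun i => w i k) 1) {b : κ → E} (hb : Summable fun k => ‖b k‖) :
    HasSum (fun i => ∑' k, w i k • b k) (∑' k, b k) := by
  set F : κ × ι → E := fun p => w p.2 p.1 • b p.1
  have hfibre (k : κ) : HasSum (fun i => F (k, i)) (b k) := by
    simpa using (hw k).smul_const (b k)
  have hF : Summable F := by
    refine Summable.of_norm ?_
    refine (summable_prod_of_nonneg fun p => norm_nonneg _).2 ⟨fun k => ?_, ?_⟩
    · simpa [F, norm_smul, abs_of_nonneg (hw_nonneg _ _)] using ((hw k).mul_right ‖b k‖).summable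
    · simpa [F, norm_smul, abs_of_nonneg (hw_nonneg _ _), tsum_mul_right, (hw _).tsum_eq] using hb
  have hsum : HasSum F (∑' k, b k) := (hF.hasSum.prod_fiberwise hfibre).tsum_eq ▸ hF.hasSum
  exact ((Equiv.prodComm ι κ).hasSum_iff.mpr hsum).prod_fiberwise
    fun i => (hF.prod_symm.prod_factor i).hasSum

theorem hasSum_euler_transform {E : Type*} [NormedAddCommGroup E] [NormedSpace ℝ E]
    [CompleteSpace E] {b : ℕ → E} (hb : Summable fun k => ‖b k‖) :
    HasSum (fun n => (1 / 2 ^ (n + 1) : ℝ) • ∑ k ∈ range (n + 1), (n.choose k : ℝ) • b k)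
      (∑' k, b k) := by
  convert hasSum_tsum_smul_of_weights_hasSum_one (fun n k => by positivity)
    hasSum_choose_div_two_pow_succ hb using 2 with n
  rw [tsum_eq_sum fun k hk => ?_, smul_sum]
  · refine sum_congr rfl fun k _ => ?_
    rw [smul_smul, one_div_mul_eq_div]
  · rw [Nat.choose_eq_zero_of_lt (by simpa using hk)]
    simp

theorem summable_norm_mul_pow_of_norm_lt {𝕜 : Type*} [NormedDivisionRing 𝕜] {a : ℕ → 𝕜}
    {r x : 𝕜} (hr : Summable fun n => a n * r ^ n) (hx : ‖x‖ < ‖r‖) :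
    Summable fun n => ‖a n * x ^ n‖ := by
  obtain ⟨C, hC⟩ := hr.tendsto_atTop_zero.norm.bddAbove_range
  have hr0 : 0 < ‖r‖ := (norm_nonneg x).trans_lt hx
  refine (summable_geometric_of_lt_one (by positivity) ((div_lt_one hr0).2 hx)).mul_left C
    |>.of_nonneg_of_le (fun n => norm_nonneg _) fun n => ?_
  calc ‖a n * x ^ n‖ = ‖a n * r ^ n‖ * (‖x‖ / ‖r‖) ^ n := by
        rw [norm_mul, norm_mul, norm_pow, norm_pow, div_pow, mul_assoc, mul_div_cancel₀]
        positivity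
    _ ≤ C * (‖x‖ / ‖r‖) ^ n := by gcongr; exact hC (Set.mem_range_self n)

theorem euler_transform (f : ℂ → ℂ) (a : ℕ → ℂ) (R : ℝ)
    (x : ℂ) (hx : ‖x‖ < R)
    (hf : ∀ t : ℂ, ‖t‖ < R → HasSum (fun n : ℕ => a n * t ^ n) (f t)) :
    f x = ∑' n : ℕ, (1 / 2 ^ (n + 1) : ℂ) *
        ∑ k ∈ range (n + 1), (n.choose k : ℂ) * x ^ k * a k := by
  obtain ⟨r, hxr, hrR⟩ := exists_between hx
  have hr : ‖(r : ℂ)‖ = r := by simp [abs_of_pos ((norm_nonneg x).trans_lt hxr)]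
  have hsummable : Summable fun k => ‖a k * x ^ k‖ :=
    summable_norm_mul_pow_of_norm_lt (hf r (by rwa [hr])).summable (by rwa [hr])
  rw [← (hf x hx).tsum_eq, ← (hasSum_euler_transform hsummable).tsum_eq]
  refine tsum_congr fun n => ?_
  simp only [Complex.real_smul, mul_sum]
  push_cast
  exact sum_congr rfl fun k _ => by ring
end

section
/- For all real x and μ with 0 < μ ≤ 1, e^{-x} = ∑_{n=0}^∞ (μ^n/(μ+1)^{n+1}) L_n(x/μ), where L_n denotes the n-th Laguerre polynomial. -/
/-!
The series is `(1 - t)` times the generating function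
`∑ tⁿ Lₙ(y) = exp (-y t / (1 - t)) / (1 - t)` (valid for `|t| < 1`) at `t = μ / (μ + 1)`, `y = x / μ`.
Expanding `Lₙ` turns the generating function into the double series of
`C(k + m, k) (-y)ᵏ / k! * t^(k + m)` over `k + m = n`; it converges absolutely, so it may be summed
first over `m`, a binomial series equal to `(-y t / (1 - t))ᵏ / k! / (1 - t)`, and then over `k`,
an exponential series.
-/

open Finset

/-- The `n`-th Laguerre polynomial as a function. -/
noncomputable def laguerre (n : ℕ) (x : ℝ) : ℝ :=
  ∑ k ∈ range (n + 1), (n.choose k : ℝ) * (-x) ^ k / (Nat.factorial k)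

theorem HasSum.sum_antidiagonal {A α : Type*} [AddCommMonoid A] [HasAntidiagonal A]
    [AddCommMonoid α] [TopologicalSpace α] [ContinuousAdd α] [RegularSpace α]
    {f : A × A → α} {a : α} (hf : HasSum f a) : HasSum (fun n ↦ ∑ p ∈ antidiagonal n, f p) a :=
  (HasAntidiagonal.sigmaAntidiagonalEquivProd.hasSum_iff.mpr hf).sigma
    fun n ↦ (antidiagonal n).hasSum _

namespace Laguerre

noncomputable def genTerm (z t : ℝ) (p : ℕ × ℕ) : ℝ :=
  ((p.1 + p.2).choose p.1 : ℝ) * (z ^ p.1 / p.1.factorial) * t ^ (p.1 + p.2)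

theorem norm_genTerm (z t : ℝ) (p : ℕ × ℕ) : ‖genTerm z t p‖ = genTerm |z| |t| p := by
  simp [genTerm]

theorem sum_antidiagonal_genTerm (y t : ℝ) (n : ℕ) :
    ∑ p ∈ antidiagonal n, genTerm (-y) t p = t ^ n * laguerre n y := by
  rw [Nat.sum_antidiagonal_eq_sum_range_succ_mk, laguerre, mul_sum]
  refine sum_congr rfl fun k hk ↦ ?_
  rw [genTerm, Nat.add_sub_cancel' (Nat.le_of_lt_succ (mem_range.mp hk))]
  ring

theorem hasSum_genTerm_slice (z : ℝ) {t : ℝ} (ht : ‖t‖ < 1) (k : ℕ) :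
    HasSum (fun m ↦ genTerm z t (k, m)) ((1 - t)⁻¹ * ((z * t / (1 - t)) ^ k / k.factorial)) := by
  have h1t : 1 - t ≠ 0 := sub_ne_zero.mpr (by rintro rfl; simp at ht)
  have hterm : (fun m ↦ genTerm z t (k, m)) =
      fun m ↦ z ^ k / k.factorial * t ^ k * ((m + k).choose k * t ^ m) := by
    ext m
    simp only [genTerm, add_comm k m]
    ring
  have hvalue : (1 - t)⁻¹ * ((z * t / (1 - t)) ^ k / k.factorial) =
      z ^ k / k.factorial * t ^ k * (1 / (1 - t) ^ (k + 1)) := by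
    rw [div_pow, mul_pow, pow_succ]
    field_simp
  rw [hterm, hvalue]
  exact (hasSum_choose_mul_geometric_of_norm_lt_one k ht).mul_left _

theorem summable_genTerm (z : ℝ) {t : ℝ} (ht : ‖t‖ < 1) : Summable (genTerm z t) := by
  have ht' : ‖|t|‖ < 1 := by rwa [Real.norm_eq_abs, abs_abs]
  refine Summable.of_norm ?_
  simp only [norm_genTerm]
  refine (summable_prod_of_nonneg fun p ↦ by unfold genTerm; positivity).mpr
    ⟨fun k ↦ (hasSum_genTerm_slice |z| ht' k).summable, ?_⟩
  simp only [(hasSum_genTerm_slice |z| ht' _).tsum_eq]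
  exact (Real.summable_pow_div_factorial _).mul_left _

theorem hasSum_genTerm (z : ℝ) {t : ℝ} (ht : ‖t‖ < 1) :
    HasSum (genTerm z t) ((1 - t)⁻¹ * Real.exp (z * t / (1 - t))) := by
  have hexp := (NormedSpace.expSeries_div_hasSum_exp (z * t / (1 - t))).mul_left (1 - t)⁻¹
  rw [← Real.exp_eq_exp_ℝ] at hexp
  have hsum := (summable_genTerm z ht).hasSum
  rwa [(hsum.prod_fiberwise (hasSum_genTerm_slice z ht)).unique hexp] at hsum

end Laguerre

theorem hasSum_pow_mul_laguerre (y : ℝ) {t : ℝ} (ht : ‖t‖ < 1) :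
    HasSum (fun n ↦ t ^ n * laguerre n y) ((1 - t)⁻¹ * Real.exp (-y * t / (1 - t))) := by
  simpa only [Laguerre.sum_antidiagonal_genTerm] using
    (Laguerre.hasSum_genTerm (-y) ht).sum_antidiagonal

theorem exp_neg_laguerre_param_general (x μ : ℝ) (hμ0 : 0 < μ) :
    Real.exp (-x) = ∑' n : ℕ, μ ^ n / (μ + 1) ^ (n + 1) * laguerre n (x / μ) := by
  have ht : ‖μ / (μ + 1)‖ < 1 := by
    rw [Real.norm_eq_abs, abs_of_pos (by positivity), div_lt_one (by positivity)]
    exact lt_add_one μ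
  have h1t : 1 - μ / (μ + 1) = (μ + 1)⁻¹ := by field_simp; ring
  have hsum := hasSum_pow_mul_laguerre (x / μ) ht
  rw [h1t, inv_inv, show -(x / μ) * (μ / (μ + 1)) / (μ + 1)⁻¹ = -x by field_simp] at hsum
  refine mul_left_cancel₀ (by positivity : μ + 1 ≠ 0) ?_
  rw [← hsum.tsum_eq, ← tsum_mul_left]
  refine tsum_congr fun n ↦ ?_
  rw [div_pow, pow_succ]
  field_simp

theorem exp_neg_laguerre_param (x μ : ℝ) (hμ0 : 0 < μ) (hμ1 : μ ≤ 1) :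
    Real.exp (-x) = ∑' n : ℕ, μ ^ n / (μ + 1) ^ (n + 1) * laguerre n (x / μ) :=
  exp_neg_laguerre_param_general x μ hμ0
end
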